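/- For z = -n (n a nonnegative integer), the function Γ(z)^P · x^{-z} (x > 0 fixed, P a positive integer) has a pole of order P at z = −n, and its residue there equals ((−1)^{Pn}/(n!)^P) · x^n · (ℓ(x) ⋆ r(n) ⋆ q)_{P−1}, where ℓ_k(x) = (−log x)^k/k!, q is the P-fold discrete convolution power of the sequence {Γ^{(k)}(1)/k!}_{k≥0}, and r(n) is the discrete convolution of the sequences {C(P+k−1,k)/m^k}_{k≥0} for m = 1,…,n (with r(0) = (1,0,0,…)). -/

import Mathlib

open scoped Nat

/-- Discrete convolution of two sequences: `(a ⋆ b)_k = ∑_{j=0}^{k} a_j b_{k-j}`. -/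
noncomputable def dconv (a b : ℕ → ℂ) : ℕ → ℂ :=
  fun k => ∑ j ∈ Finset.range (k + 1), a j * b (k - j)

/-- The identity sequence `(1, 0, 0, …)` for discrete convolution. -/
def dconvOne : ℕ → ℂ := fun k => if k = 0 then 1 else 0

/-- `P`-fold discrete convolution power. -/
noncomputable def dconvPow (a : ℕ → ℂ) : ℕ → (ℕ → ℂ)
  | 0 => dconvOne
  | n + 1 => dconv (dconvPow a n) a

/-- The sequence `q`: the `P`-fold convolution power of `{Γ^{(k)}(1)/k!}_{k≥0}`. -/
noncomputable def qSeq (P : ℕ) : ℕ → ℂ :=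
  dconvPow (fun k => iteratedDeriv k Complex.Gamma 1 / (k ! : ℂ)) P

/-- The sequence `r(n)`: the convolution of `{C(P+k-1,k)/m^k}_{k≥0}` over `m = 1,…,n`,
with `r(0) = (1,0,0,…)`. -/
noncomputable def rSeq (P : ℕ) : ℕ → (ℕ → ℂ)
  | 0 => dconvOne
  | m + 1 => dconv (rSeq P m)
      (fun k => ((P + k - 1).choose k : ℂ) / ((m : ℂ) + 1) ^ k)


/-!
Since `Γ(z + n + 1) = Γ(z) z (z + 1) ⋯ (z + n)` and
`z (z + 1) ⋯ (z + n - 1) = (-1)ⁿ n! ∏_{m=1}^{n} (1 - (z + n)/m)`, away from the poles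
`(Γ(z) (z + n))^P = ((-1)^{Pn}/(n!)^P) · ∏_{m=1}^{n} (1 - (z + n)/m)^{-P} · Γ(z + n + 1)^P`.
So `Γ(z)^P x^{-z} = G(z)/(z + n)^P` where `G` is that constant times the three analytic
factors `x^{-z} = e^{-z log x}`, `∏ (1 - (z + n)/m)^{-P}` and `Γ(z + n + 1)^P`, none of which
vanishes at `-n`. The residue is the Taylor coefficient of index `P - 1` of `G` at `-n`. By
Leibniz's rule, Taylor coefficients of a product are the convolution of those of the factors,
and the factors have Taylor coefficients `xⁿ ℓ(x)`, `r(n)` (binomial series) and `q`.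
-/

open Finset

noncomputable def taylorCoeff (f : ℂ → ℂ) (c : ℂ) (k : ℕ) : ℂ :=
  iteratedDeriv k f c / (k ! : ℂ)

theorem dconv_const_mul_left (a : ℂ) (u v : ℕ → ℂ) (k : ℕ) :
    dconv (fun j => a * u j) v k = a * dconv u v k := by
  simp only [dconv, mul_sum, mul_assoc]

section taylorCoeff

variable {f g : ℂ → ℂ} {c : ℂ}

theorem taylorCoeff_one : taylorCoeff (fun _ => 1) c = dconvOne := by
  funext k
  by_cases hk : k = 0 <;> simp [taylorCoeff, iteratedDeriv_const, dconvOne, hk]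

theorem taylorCoeff_const_mul (a : ℂ) (f : ℂ → ℂ) (c : ℂ) :
    taylorCoeff (fun z => a * f z) c = fun k => a * taylorCoeff f c k := by
  funext k
  simp [taylorCoeff, mul_div_assoc]

theorem taylorCoeff_comp_add_const (f : ℂ → ℂ) (c d : ℂ) :
    taylorCoeff (fun z => f (z + d)) c = taylorCoeff f (c + d) := by
  funext k
  simp [taylorCoeff, iteratedDeriv_comp_add_const]

/-- Leibniz's rule: `C(k, j) / k! = 1 / (j! (k - j)!)`. -/
theorem taylorCoeff_mul (hf : AnalyticAt ℂ f c) (hg : AnalyticAt ℂ g c) :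
    taylorCoeff (fun z => f z * g z) c = dconv (taylorCoeff f c) (taylorCoeff g c) := by
  funext k
  rw [taylorCoeff, iteratedDeriv_fun_mul hf.contDiffAt hg.contDiffAt, sum_div, dconv]
  refine sum_congr rfl fun j hj => ?_
  have hjk : j ≤ k := Nat.lt_succ_iff.mp (mem_range.mp hj)
  have hchoose : (k.choose j * j ! * (k - j)! : ℂ) = k ! := by
    exact_mod_cast Nat.choose_mul_factorial_mul_factorial hjk
  have hchoose_ne : (k.choose j : ℂ) ≠ 0 := by exact_mod_cast (Nat.choose_pos hjk).ne'
  rw [taylorCoeff, taylorCoeff, ← hchoose]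
  field_simp

theorem taylorCoeff_pow (hf : AnalyticAt ℂ f c) (P : ℕ) :
    taylorCoeff (fun z => f z ^ P) c = dconvPow (taylorCoeff f c) P := by
  induction P with
  | zero => simpa [dconvPow] using taylorCoeff_one
  | succ P ih =>
    simp only [pow_succ]
    rw [taylorCoeff_mul (f := fun z => f z ^ P) (hf.pow P) hf, ih, dconvPow]

end taylorCoeff

theorem cpow_neg_eq_exp {x : ℝ} (hx : 0 < x) (z : ℂ) :
    (x : ℂ) ^ (-z) = Complex.exp (-(Real.log x : ℂ) * z) := by
  rw [Complex.cpow_def_of_ne_zero (by exact_mod_cast hx.ne'), Complex.ofReal_log hx.le]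
  ring_nf

theorem taylorCoeff_cpow_neg {x : ℝ} (hx : 0 < x) (c : ℂ) :
    taylorCoeff (fun z => (x : ℂ) ^ (-z)) c =
      fun k => (x : ℂ) ^ (-c) * ((-(Real.log x : ℂ)) ^ k / (k ! : ℂ)) := by
  funext k
  simp only [taylorCoeff, cpow_neg_eq_exp hx, iteratedDeriv_cexp_const_mul]
  ring

/-- Since `(1 - w / a)⁻¹ ^ P = a ^ P * (a - w) ^ (-P)`, this is the iterated derivative of a
power; the rising factorial `P (P + 1) ⋯ (P + k - 1)` over `k!` is `C(P + k - 1, k)`. -/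
theorem taylorCoeff_inv_one_sub_div_pow {a : ℂ} (ha : a ≠ 0) (P : ℕ) :
    taylorCoeff (fun w => (1 - w / a)⁻¹ ^ P) 0 =
      fun k => ((P + k - 1).choose k : ℂ) / a ^ k := by
  have hfun : (fun w => (1 - w / a)⁻¹ ^ P) = fun w => a ^ P * (a - w) ^ (-(P : ℤ)) := by
    funext w
    rw [zpow_neg, zpow_natCast, ← inv_pow, ← mul_pow, one_sub_div ha, inv_div, div_eq_mul_inv]
  funext k
  have hrising : (-1) ^ k * ∏ i ∈ range k, (((-(P : ℤ) : ℤ) : ℂ) - i) =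
      (k ! : ℂ) * ((P + k - 1).choose k : ℂ) := by
    rw [← Nat.cast_mul, ← Nat.ascFactorial_eq_factorial_mul_choose',
      Nat.ascFactorial_eq_prod_range, show (-1 : ℂ) ^ k = ∏ _i ∈ range k, (-1) by simp,
      ← prod_mul_distrib]
    push_cast
    exact prod_congr rfl fun i _ => by ring
  have hpow : a ^ P * a ^ (-(P : ℤ) - k) = (a ^ k)⁻¹ := by
    rw [zpow_sub₀ ha, zpow_neg, zpow_natCast, zpow_natCast]
    field_simp
  rw [taylorCoeff, hfun, iteratedDeriv_const_mul_field,
    iteratedDeriv_comp_const_sub k (fun y => y ^ (-(P : ℤ))) a, iteratedDeriv_eq_iterate]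
  simp only [iter_deriv_zpow, sub_zero, smul_eq_mul]
  calc _ = ((-1) ^ k * ∏ i ∈ range k, (((-(P : ℤ) : ℤ) : ℂ) - i)) *
        (a ^ P * a ^ (-(P : ℤ) - k)) / k ! := by ring
    _ = _ := by
      rw [hrising, hpow]
      field_simp [Nat.cast_ne_zero.mpr k.factorial_ne_zero]

/-- With `w = z + n`, the factor of `(Γ(z) (z + n))^P` that `r(n)` expands. -/
noncomputable def binomialProduct (P n : ℕ) (w : ℂ) : ℂ :=
  ∏ m ∈ range n, (1 - w / ((m : ℂ) + 1))⁻¹ ^ P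

theorem analyticAt_binomialProduct (P n : ℕ) : AnalyticAt ℂ (binomialProduct P n) 0 := by
  refine Finset.analyticAt_fun_prod _ fun m _ => ?_
  fun_prop (disch := simp)

theorem taylorCoeff_binomialProduct (P n : ℕ) :
    taylorCoeff (binomialProduct P n) 0 = rSeq P n := by
  induction n with
  | zero => exact taylorCoeff_one
  | succ n ih =>
    have hsplit : binomialProduct P (n + 1) =
        fun w => binomialProduct P n w * (1 - w / ((n : ℂ) + 1))⁻¹ ^ P := by
      funext w
      simp only [binomialProduct, prod_range_succ]
    rw [hsplit, taylorCoeff_mul (analyticAt_binomialProduct P n) (by fun_prop (disch := simp)),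
      ih, taylorCoeff_inv_one_sub_div_pow (Nat.cast_add_one_ne_zero n), rSeq]

theorem taylorCoeff_binomialProduct_add_natCast (P n : ℕ) :
    taylorCoeff (fun z => binomialProduct P n (z + n)) (-n) = rSeq P n := by
  rw [taylorCoeff_comp_add_const, neg_add_cancel, taylorCoeff_binomialProduct]

theorem ascPochhammer_eval_eq_prod_one_sub_div (n : ℕ) (z : ℂ) :
    (ascPochhammer ℂ n).eval z =
      (-1) ^ n * n ! * ∏ m ∈ range n, (1 - (z + n) / ((m : ℂ) + 1)) := by
  induction n generalizing z with
  | zero => simp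
  | succ n ih =>
    have hshift : ∀ m : ℕ,
        1 - (z + 1 + n) / ((m : ℂ) + 1) = 1 - (z + ↑(n + 1)) / ((m : ℂ) + 1) := by
      intro m; push_cast; ring
    rw [ascPochhammer_succ_left, Polynomial.eval_mul, Polynomial.eval_comp, ih]
    simp only [Polynomial.eval_X, Polynomial.eval_add, Polynomial.eval_one, hshift,
      prod_range_succ, Nat.factorial_succ]
    have hn : (n : ℂ) + 1 ≠ 0 := Nat.cast_add_one_ne_zero n
    push_cast
    field_simp
    ring

theorem Gamma_mul_add_natCast_pow {z : ℂ} (hz : ∀ k : ℕ, z ≠ -k) (n P : ℕ) :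
    (Complex.Gamma z * (z + n)) ^ P = (-1) ^ (P * n) / (n ! : ℂ) ^ P *
      (binomialProduct P n (z + n) * Complex.Gamma (z + (n + 1)) ^ P) := by
  have hasc := ascPochhammer_eval_eq_prod_one_sub_div n z
  set B := ∏ m ∈ range n, (1 - (z + n) / ((m : ℂ) + 1))
  have hasc_ne : (ascPochhammer ℂ n).eval z ≠ 0 := by
    rw [← Complex.Gamma_add_nat_div_Gamma_eq z hz]
    refine div_ne_zero (Complex.Gamma_ne_zero fun m h => hz (n + m) ?_) (Complex.Gamma_ne_zero hz)
    push_cast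
    linear_combination h
  have hB : B ≠ 0 := fun h => hasc_ne (by rw [hasc, h, mul_zero])
  have hGamma :
      Complex.Gamma (z + (n + 1)) = Complex.Gamma z * (z + n) * ((-1) ^ n * n ! * B) := by
    have h := Complex.Gamma_add_nat_div_Gamma_eq (n := n + 1) z hz
    rw [ascPochhammer_succ_eval, hasc, div_eq_iff (Complex.Gamma_ne_zero hz)] at h
    push_cast at h
    rw [h]
    ring
  have hprod : binomialProduct P n (z + n) = B⁻¹ ^ P := by
    rw [binomialProduct, prod_pow, prod_inv_distrib]
  have hsign : ((-1 : ℂ) ^ n) ^ 2 = 1 := by rw [← pow_mul, mul_comm, pow_mul]; norm_num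
  rw [hGamma, hprod, mul_comm P n, pow_mul, ← div_pow, ← mul_pow, ← mul_pow]
  have hfac : (n ! : ℂ) ≠ 0 := Nat.cast_ne_zero.mpr n.factorial_ne_zero
  congr 1
  field_simp
  linear_combination (-(Complex.Gamma z * (z + n))) * hsign

theorem analyticAt_Gamma_of_re_pos {s : ℂ} (hs : 0 < s.re) : AnalyticAt ℂ Complex.Gamma s := by
  rw [Complex.analyticAt_iff_eventually_differentiableAt]
  filter_upwards [Complex.continuous_re.continuousAt.eventually (lt_mem_nhds hs)] with z hz
  refine Complex.differentiableAt_Gamma z fun m h => ?_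
  simp only [h, Complex.neg_re, Complex.natCast_re] at hz
  linarith [(m.cast_nonneg : (0 : ℝ) ≤ m)]

theorem analyticAt_Gamma_add_natCast_add_one (n : ℕ) :
    AnalyticAt ℂ (fun z => Complex.Gamma (z + (n + 1))) (-n) :=
  (analyticAt_Gamma_of_re_pos (s := 1) (by simp)).comp_of_eq (by fun_prop) (by ring)

theorem taylorCoeff_Gamma_add_natCast_add_one_pow (P n : ℕ) :
    taylorCoeff (fun z => Complex.Gamma (z + (n + 1)) ^ P) (-n) = qSeq P := by
  rw [taylorCoeff_comp_add_const (fun w => Complex.Gamma w ^ P),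
    show -(n : ℂ) + (n + 1) = 1 by ring, taylorCoeff_pow (analyticAt_Gamma_of_re_pos (by simp))]
  rfl

theorem eventually_ne_neg_natCast (n : ℕ) :
    ∀ᶠ z : ℂ in nhdsWithin (-(n : ℂ)) {(-(n : ℂ))}ᶜ, ∀ k : ℕ, z ≠ -(k : ℂ) := by
  filter_upwards [eventually_nhdsWithin_of_eventually_nhds (Metric.ball_mem_nhds _ one_pos),
    self_mem_nhdsWithin] with z hball hne k rfl
  have hkn : k ≠ n := fun h => hne (by rw [h, Set.mem_singleton_iff])
  rw [dist_eq_norm, show -(k : ℂ) - -(n : ℂ) = ((n - k : ℤ) : ℂ) by push_cast; ring,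
    Complex.norm_intCast] at hball
  have h : |(n - k : ℤ)| < 1 := by exact_mod_cast hball
  have := Int.abs_lt_one_iff.mp h
  omega

theorem gamma_pow_residue_general (x : ℝ) (hx : 0 < x) (P n : ℕ) :
    ∃ G : ℂ → ℂ, AnalyticAt ℂ G (-(n : ℂ)) ∧ G (-(n : ℂ)) ≠ 0 ∧
      (∀ᶠ z in nhdsWithin (-(n : ℂ)) {(-(n : ℂ))}ᶜ,
        Complex.Gamma z ^ P * (x : ℂ) ^ (-z) = G z / (z + (n : ℂ)) ^ P) ∧
      iteratedDeriv (P - 1) G (-(n : ℂ)) / ((P - 1)! : ℂ) =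
        ((-1 : ℂ) ^ (P * n) / ((n ! : ℂ)) ^ P) * (x : ℂ) ^ (n : ℕ) *
          dconv (fun k => (-(Real.log x : ℂ)) ^ k / (k ! : ℂ))
            (dconv (rSeq P n) (qSeq P)) (P - 1) := by
  set s : ℂ := (-1) ^ (P * n) / (n ! : ℂ) ^ P
  set E : ℂ → ℂ := fun z => (x : ℂ) ^ (-z)
  set R : ℂ → ℂ := fun z => binomialProduct P n (z + n)
  set Q : ℂ → ℂ := fun z => Complex.Gamma (z + (n + 1)) ^ P
  have hE : AnalyticAt ℂ E (-n) := by
    simp only [E, cpow_neg_eq_exp hx]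
    fun_prop
  have hR : AnalyticAt ℂ R (-n) :=
    (analyticAt_binomialProduct P n).comp_of_eq (by fun_prop) (neg_add_cancel _)
  have hQ : AnalyticAt ℂ Q (-n) := (analyticAt_Gamma_add_natCast_add_one n).pow P
  refine ⟨fun z => s * (E z * (R z * Q z)), by fun_prop, ?_, ?_, ?_⟩
  · have hs : s ≠ 0 := by simp [s, n.factorial_ne_zero]
    have hE0 : E (-n) ≠ 0 := by simp [E, hx.ne']
    simpa [R, Q, binomialProduct, hs] using hE0
  · filter_upwards [eventually_ne_neg_natCast n, self_mem_nhdsWithin] with z hz hne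
    have hzn : z + n ≠ 0 := fun h => hne (eq_neg_of_add_eq_zero_left h)
    rw [eq_div_iff (pow_ne_zero P hzn), mul_right_comm, ← mul_pow, Gamma_mul_add_natCast_pow hz]
    ring
  · change taylorCoeff _ (-n) (P - 1) = _
    rw [taylorCoeff_const_mul, taylorCoeff_mul hE (hR.fun_mul hQ), taylorCoeff_mul hR hQ,
      taylorCoeff_cpow_neg hx, taylorCoeff_binomialProduct_add_natCast,
      taylorCoeff_Gamma_add_natCast_add_one_pow]
    beta_reduce
    rw [dconv_const_mul_left, neg_neg, Complex.cpow_natCast, mul_assoc]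

/-- For fixed `x > 0` and a positive integer `P`, the function `z ↦ Γ(z)^P x^{-z}` has a
pole of order `P` at `z = -n` (i.e. it equals `G z / (z+n)^P` near `-n` for an analytic
`G` with `G(-n) ≠ 0`), and its residue `G^{(P-1)}(-n)/(P-1)!` there equals
`((-1)^{Pn}/(n!)^P) · xⁿ · (ℓ(x) ⋆ r(n) ⋆ q)_{P-1}`, where `ℓ_k(x) = (-log x)^k/k!`. -/
theorem gamma_pow_residue (x : ℝ) (hx : 0 < x) (P n : ℕ) (hP : 0 < P) :
    ∃ G : ℂ → ℂ, AnalyticAt ℂ G (-(n : ℂ)) ∧ G (-(n : ℂ)) ≠ 0 ∧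
      (∀ᶠ z in nhdsWithin (-(n : ℂ)) {(-(n : ℂ))}ᶜ,
        Complex.Gamma z ^ P * (x : ℂ) ^ (-z) = G z / (z + (n : ℂ)) ^ P) ∧
      iteratedDeriv (P - 1) G (-(n : ℂ)) / ((P - 1)! : ℂ) =
        ((-1 : ℂ) ^ (P * n) / ((n ! : ℂ)) ^ P) * (x : ℂ) ^ (n : ℕ) *
          dconv (fun k => (-(Real.log x : ℂ)) ^ k / (k ! : ℂ))
            (dconv (rSeq P n) (qSeq P)) (P - 1) :=
  gamma_pow_residue_general x hx P n
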